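/- arXiv:1105.4842 — 5 statements merged into one kernel-verified Lean document; each statement's English description precedes it below -/
import Mathlib

section
/- Let Z : [0,1] → ℝ be continuous with Z(0) = Z(1) = 0, and suppose Z attains its minimum -Δ (with Δ ≥ 0) at the point s* ∈ [0,1]. Let D be any pseudometric on [0,1] satisfying D(s, s*) = Z(s) + Δ for every s ∈ [0,1], and D(s,t) ≤ Z(s) + Z(t) - 2·max( min_{r∈[s∧t,s∨t]} Z(r), min over the complementary cyclic interval of Z ) for all s,t. For r ∈ [0, Z(s) + Δ] define φ_s(r) = inf{t ∈ [s,1] : Z(t) = Z(s) - r} if min_{[s,1]} Z ≤ Z(s) - r, and φ_s(r) = inf{t ∈ [0,s] : Z(t) = Z(s) - r} otherwise. Then for all 0 ≤ r ≤ r' ≤ Z(s) + Δ one has D(φ_s(r), φ_s(r')) = r' - r; i.e., r ↦ φ_s(r) parametrizes a geodesic from s to s* for the pseudometric D. -/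
open Set

lemma stmt_4_helper (Z : ℝ → ℝ) (u v c : ℝ) (huv : u ≤ v)
    (hZ : ContinuousOn Z (Icc u v)) (hcu : c ≤ Z u)
    (hex : ∃ t ∈ Icc u v, Z t ≤ c) :
    sInf {t | t ∈ Icc u v ∧ Z t = c} ∈ Icc u v ∧
    Z (sInf {t | t ∈ Icc u v ∧ Z t = c}) = c ∧
    ∀ t ∈ Icc u (sInf {t | t ∈ Icc u v ∧ Z t = c}), c ≤ Z t := by
  obtain ⟨t0, ht0, hZt0⟩ := hex
  have hne : {t | t ∈ Icc u v ∧ Z t = c}.Nonempty := by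
    have hc : c ∈ Icc (Z t0) (Z u) := ⟨hZt0, hcu⟩
    have hsub : Icc u t0 ⊆ Icc u v := Icc_subset_Icc le_rfl ht0.2
    obtain ⟨x, hx, hxc⟩ := intermediate_value_Icc' ht0.1 (hZ.mono hsub) hc
    exact ⟨x, ⟨⟨hx.1, hx.2.trans ht0.2⟩, hxc⟩⟩
  have hclosed : IsClosed {t | t ∈ Icc u v ∧ Z t = c} := by
    have : {t | t ∈ Icc u v ∧ Z t = c} = Icc u v ∩ Z ⁻¹' {c} := by
      ext t; simp [Set.mem_setOf_eq, Set.mem_inter_iff]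
    rw [this]
    exact hZ.preimage_isClosed_of_isClosed isClosed_Icc isClosed_singleton
  have hbdd : BddBelow {t | t ∈ Icc u v ∧ Z t = c} := ⟨u, fun t ht => ht.1.1⟩
  have hpmem := hclosed.csInf_mem hne hbdd
  refine ⟨hpmem.1, hpmem.2, ?_⟩
  intro t ht
  by_contra hlt
  push_neg at hlt
  have htv : t ∈ Icc u v := ⟨ht.1, ht.2.trans hpmem.1.2⟩
  have hc : c ∈ Icc (Z t) (Z u) := ⟨hlt.le, hcu⟩
  have hsub : Icc u t ⊆ Icc u v := Icc_subset_Icc le_rfl htv.2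
  obtain ⟨x, hx, hxc⟩ := intermediate_value_Icc' ht.1 (hZ.mono hsub) hc
  have hxmem : x ∈ {t | t ∈ Icc u v ∧ Z t = c} :=
    ⟨⟨hx.1, hx.2.trans htv.2⟩, hxc⟩
  have hle : sInf {t | t ∈ Icc u v ∧ Z t = c} ≤ x := csInf_le hbdd hxmem
  have : t = x := le_antisymm (le_trans ht.2 hle) hx.2
  rw [← this] at hxc
  exact absurd hxc (ne_of_lt hlt)

theorem stmt_4 (Z : ℝ → ℝ) (hZ : ContinuousOn Z (Icc 0 1))
    (h0 : Z 0 = 0) (h1 : Z 1 = 0)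
    (Δ : ℝ) (hΔ : 0 ≤ Δ) (sstar : ℝ) (hsstar : sstar ∈ Icc (0:ℝ) 1)
    (hmin : ∀ s ∈ Icc (0:ℝ) 1, -Δ ≤ Z s) (hZstar : Z sstar = -Δ)
    (D : ℝ → ℝ → ℝ)
    (hsymm : ∀ s t : ℝ, D s t = D t s)
    (htri : ∀ s ∈ Icc (0:ℝ) 1, ∀ t ∈ Icc (0:ℝ) 1, ∀ u ∈ Icc (0:ℝ) 1,
      D s u ≤ D s t + D t u)
    (hDs : ∀ s ∈ Icc (0:ℝ) 1, D s sstar = Z s + Δ)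
    (hupper : ∀ s ∈ Icc (0:ℝ) 1, ∀ t ∈ Icc (0:ℝ) 1,
      D s t ≤ Z s + Z t - 2 * max (sInf (Z '' Icc (min s t) (max s t)))
        (sInf (Z '' (Icc (max s t) 1 ∪ Icc 0 (min s t)))))
    (s : ℝ) (hs : s ∈ Icc (0:ℝ) 1)
    (φ : ℝ → ℝ)
    (hφ : ∀ r : ℝ, φ r = if sInf (Z '' Icc s 1) ≤ Z s - r
      then sInf {t | t ∈ Icc s 1 ∧ Z t = Z s - r}
      else sInf {t | t ∈ Icc 0 s ∧ Z t = Z s - r}) :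
    ∀ r r' : ℝ, 0 ≤ r → r ≤ r' → r' ≤ Z s + Δ → D (φ r) (φ r') = r' - r := by
  intro r r' hr0 hrr' hr'
  set m1 := sInf (Z '' Icc s 1) with hm1def
  have hs1 : Icc s 1 ⊆ Icc (0:ℝ) 1 := Icc_subset_Icc hs.1 le_rfl
  have h0s : Icc (0:ℝ) s ⊆ Icc (0:ℝ) 1 := Icc_subset_Icc le_rfl hs.2
  have hne1 : (Z '' Icc s 1).Nonempty := ⟨Z 1, mem_image_of_mem _ ⟨hs.2, le_rfl⟩⟩
  have himg : IsCompact (Z '' Icc s 1) := isCompact_Icc.image_of_continuousOn (hZ.mono hs1)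
  have hm1mem : m1 ∈ Z '' Icc s 1 := himg.sInf_mem hne1
  have hm1le : ∀ t ∈ Icc s 1, m1 ≤ Z t := fun t ht =>
    csInf_le himg.bddBelow (mem_image_of_mem _ ht)
  have hm1le0 : m1 ≤ 0 := by
    have := hm1le 1 ⟨hs.2, le_rfl⟩; rw [h1] at this; exact this
  have key : ∀ ρ : ℝ, 0 ≤ ρ → ρ ≤ Z s + Δ →
      Z (φ ρ) = Z s - ρ ∧
      ((m1 ≤ Z s - ρ ∧ φ ρ ∈ Icc s 1 ∧ ∀ t ∈ Icc s (φ ρ), Z s - ρ ≤ Z t)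
       ∨ (Z s - ρ < m1 ∧ φ ρ ∈ Icc 0 s ∧ ∀ t ∈ Icc 0 (φ ρ), Z s - ρ ≤ Z t)) := by
    intro ρ h0ρ hρ
    rw [hφ ρ]
    by_cases hcase : m1 ≤ Z s - ρ
    · rw [if_pos hcase]
      obtain ⟨tm, htm, hZtm⟩ := hm1mem
      have H := stmt_4_helper Z s 1 (Z s - ρ) hs.2 (hZ.mono hs1) (by linarith)
        ⟨tm, htm, by rw [hZtm]; exact hcase⟩
      exact ⟨H.2.1, Or.inl ⟨hcase, H.1, H.2.2⟩⟩
    · rw [if_neg hcase]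
      push_neg at hcase
      have hsstar0s : sstar ∈ Icc (0:ℝ) s := by
        refine ⟨hsstar.1, ?_⟩
        by_contra h
        push_neg at h
        have := hm1le sstar ⟨h.le, hsstar.2⟩
        rw [hZstar] at this
        linarith
      have H := stmt_4_helper Z 0 s (Z s - ρ) hs.1 (hZ.mono h0s)
        (by rw [h0]; linarith) ⟨sstar, hsstar0s, by rw [hZstar]; linarith⟩
      exact ⟨H.2.1, Or.inr ⟨hcase, H.1, H.2.2⟩⟩
  obtain ⟨hZb, hb⟩ := key r hr0 (le_trans hrr' hr')
  obtain ⟨hZa, ha⟩ := key r' (le_trans hr0 hrr') hr'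
  set b := φ r with hbdef
  set a := φ r' with hadef
  have hb01 : b ∈ Icc (0:ℝ) 1 := by
    rcases hb with ⟨_, h, _⟩ | ⟨_, h, _⟩
    exacts [hs1 h, h0s h]
  have ha01 : a ∈ Icc (0:ℝ) 1 := by
    rcases ha with ⟨_, h, _⟩ | ⟨_, h, _⟩
    exacts [hs1 h, h0s h]
  -- lower bound
  have hlow : r' - r ≤ D b a := by
    have h3 := htri b hb01 a ha01 sstar hsstar
    have e1 := hDs b hb01
    have e2 := hDs a ha01
    rw [e1] at h3
    rw [hZb, hZa] at *
    linarith [hDs a ha01]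
  -- upper bound
  have hup := hupper b hb01 a ha01
  have hbound : Z s - r' ≤ max (sInf (Z '' Icc (min b a) (max b a)))
      (sInf (Z '' (Icc (max b a) 1 ∪ Icc 0 (min b a)))) := by
    -- if a < b in the "same branch" cases then r = r' and a = b
    have heq : r = r' → a = b := by
      intro h; rw [hbdef, hadef, h]
    rcases hb with ⟨hm1r, hbmem, hbprop⟩ | ⟨hm1r, hbmem, hbprop⟩ <;>
      rcases ha with ⟨hm1r', hamem, haprop⟩ | ⟨hm1r', hamem, haprop⟩
    · -- case A: both in [s,1]
      have hba : b ≤ a := by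
        by_contra h
        push_neg at h
        have : Z s - r ≤ Z a := hbprop a ⟨hamem.1, h.le⟩
        rw [hZa] at this
        have : r = r' := le_antisymm hrr' (by linarith)
        exact absurd (heq this) (ne_of_lt h)
      rw [min_eq_left hba, max_eq_right hba]
      refine le_trans (le_csInf ⟨Z b, mem_image_of_mem Z (show b ∈ Icc b a from ⟨le_rfl, hba⟩)⟩ ?_) (le_max_left _ _)
      rintro y ⟨t, ht, rfl⟩
      exact haprop t ⟨hbmem.1.trans ht.1, ht.2⟩
    · -- case B: b ∈ [s,1], a ∈ [0,s]
      have hab : a ≤ b := hamem.2.trans hbmem.1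
      rw [min_eq_right hab, max_eq_left hab]
      refine le_trans (le_csInf ⟨Z b, mem_image_of_mem _ (Or.inl ⟨le_rfl, hbmem.2⟩)⟩ ?_)
        (le_max_right _ _)
      rintro y ⟨t, ht, rfl⟩
      rcases ht with ht | ht
      · have := hm1le t ⟨hbmem.1.trans ht.1, ht.2⟩
        linarith
      · exact haprop t ht
    · -- impossible
      exfalso; linarith
    · -- case C: both in [0,s]
      have hba : b ≤ a := by
        by_contra h
        push_neg at h
        have : Z s - r ≤ Z a := hbprop a ⟨hamem.1, h.le⟩
        rw [hZa] at this
        have : r = r' := le_antisymm hrr' (by linarith)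
        exact absurd (heq this) (ne_of_lt h)
      rw [min_eq_left hba, max_eq_right hba]
      refine le_trans (le_csInf ⟨Z b, mem_image_of_mem Z (show b ∈ Icc b a from ⟨le_rfl, hba⟩)⟩ ?_) (le_max_left _ _)
      rintro y ⟨t, ht, rfl⟩
      exact haprop t ⟨hbmem.1.trans ht.1, ht.2⟩
  have hupfinal : D b a ≤ r' - r := by
    rw [hZb, hZa] at hup
    linarith
  linarith
end

section
/- Let (E,d) be a metric space, let x,y ∈ E with d(x,y) > 0, and let ω : [0, d(x,y)] → E be a geodesic from x to y (so d(ω(t),ω(t')) = |t - t'| and ω(0)=x, ω(d(x,y))=y). Fix h > 0 and let d* ≥ d be another metric on E inducing the same topology. Define t₀ = 0 and inductively t_{n+1} = sup{ t ≥ t_n : d*(ω(t), ω(t_n)) ≤ h }, stopping when t_n = d(x,y). If i < j and both t_i, t_j are defined with t_j < d(x,y), then the open balls B_{d*}(ω(t_i), h/2) and B_{d*}(ω(t_j), h/2) are disjoint. -/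
open Set

theorem stmt_6 {E : Type*} [MetricSpace E] (x y : E) (hxy : 0 < dist x y)
    (ω : ℝ → E) (hω0 : ω 0 = x) (hωL : ω (dist x y) = y)
    (hgeo : ∀ t ∈ Icc (0:ℝ) (dist x y), ∀ t' ∈ Icc (0:ℝ) (dist x y),
      dist (ω t) (ω t') = |t - t'|)
    (h : ℝ) (hh : 0 < h)
    (d' : E → E → ℝ)
    (hd'nonneg : ∀ a b : E, 0 ≤ d' a b)
    (hd'symm : ∀ a b : E, d' a b = d' b a)
    (hd'tri : ∀ a b c : E, d' a c ≤ d' a b + d' b c)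
    (hd'self : ∀ a : E, d' a a = 0)
    (hd'eq : ∀ a b : E, d' a b = 0 → a = b)
    (hle : ∀ a b : E, dist a b ≤ d' a b)
    (htop : ∀ (u : ℕ → E) (a : E),
      Filter.Tendsto (fun n => d' (u n) a) Filter.atTop (nhds 0) ↔
      Filter.Tendsto u Filter.atTop (nhds a))
    (t : ℕ → ℝ) (ht0 : t 0 = 0)
    (hrec : ∀ n : ℕ, t n < dist x y →
      t (n+1) = sSup {u | u ∈ Icc (t n) (dist x y) ∧ d' (ω u) (ω (t n)) ≤ h})
    (i j : ℕ) (hij : i < j) (hlt : ∀ n ≤ j, t n < dist x y) :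
    ∀ z : E, ¬ (d' z (ω (t i)) < h / 2 ∧ d' z (ω (t j)) < h / 2) := by
  set D := dist x y with hD
  -- basic facts about the sets S n
  have hSmem : ∀ n, 0 ≤ t n → t n ≤ D →
      t n ∈ {u | u ∈ Icc (t n) D ∧ d' (ω u) (ω (t n)) ≤ h} := by
    intro n h0 h1
    exact ⟨⟨le_refl _, h1⟩, by rw [hd'self]; exact hh.le⟩
  have hSbdd : ∀ n, BddAbove {u | u ∈ Icc (t n) D ∧ d' (ω u) (ω (t n)) ≤ h} :=
    fun n => ⟨D, fun u hu => hu.1.2⟩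
  -- nonnegativity and monotonicity up to j
  have hchain : ∀ n ≤ j, 0 ≤ t n ∧ (∀ m ≤ n, t m ≤ t n) := by
    intro n hn
    induction n with
    | zero =>
      refine ⟨by rw [ht0], ?_⟩
      intro m hm; interval_cases m; rfl
    | succ k ih =>
      obtain ⟨hk0, hkmono⟩ := ih (Nat.le_of_succ_le hn)
      have hkD : t k < D := hlt k (Nat.le_of_succ_le hn)
      have hstep : t k ≤ t (k+1) := by
        rw [hrec k hkD]
        exact le_csSup (hSbdd k) (hSmem k hk0 hkD.le)
      refine ⟨hk0.trans hstep, ?_⟩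
      intro m hm
      rcases Nat.lt_or_ge m (k+1) with hm' | hm'
      · exact (hkmono m (Nat.lt_succ_iff.mp hm')).trans hstep
      · have : m = k + 1 := le_antisymm hm hm'
        rw [this]
      -- done
  have htiD : t i < D := hlt i hij.le
  have hi0 : 0 ≤ t i := (hchain i hij.le).1
  have hsucc_le : t (i+1) ≤ t j := (hchain j le_rfl).2 (i+1) hij
  have htjD : t j < D := hlt j le_rfl
  -- anything strictly beyond t (i+1) is far from ω (t i)
  have hfar : ∀ u : ℝ, t (i+1) < u → u ≤ D → h < d' (ω u) (ω (t i)) := by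
    intro u h1 h2
    by_contra hcon
    push_neg at hcon
    have hti_u : t i ≤ u := le_trans ((hchain (i+1) hij).2 i i.le_succ) h1.le
    have : u ≤ t (i+1) := by
      rw [hrec i htiD]
      exact le_csSup (hSbdd i) ⟨⟨hti_u, h2⟩, hcon⟩
    exact absurd h1 (not_lt.mpr this)
  -- main claim: h ≤ d' (ω (t j)) (ω (t i))
  have hmain : h ≤ d' (ω (t j)) (ω (t i)) := by
    rcases lt_or_eq_of_le hsucc_le with hlt' | heq
    · exact (hfar (t j) hlt' htjD.le).le
    · -- t (i+1) = t j; approximate from the right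
      set b := d' (ω (t j)) (ω (t i)) with hb
      set δ : ℕ → ℝ := fun n => min (1/(n+1)) (D - t j) with hδ
      have hδpos : ∀ n, 0 < δ n := fun n =>
        lt_min (by positivity) (sub_pos.mpr htjD)
      have hδ0 : Filter.Tendsto δ Filter.atTop (nhds 0) := by
        apply squeeze_zero (fun n => (hδpos n).le) (fun n => min_le_left _ _)
        exact tendsto_one_div_add_atTop_nhds_zero_nat
      set u : ℕ → ℝ := fun n => t j + δ n with hu
      have huD : ∀ n, u n ≤ D := fun n => by
        have := min_le_right (1/((n:ℝ)+1)) (D - t j)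
        simp only [hu]; linarith [this]
      have hωu : Filter.Tendsto (fun n => ω (u n)) Filter.atTop (nhds (ω (t j))) := by
        rw [tendsto_iff_dist_tendsto_zero]
        have heqd : ∀ n, dist (ω (u n)) (ω (t j)) = δ n := by
          intro n
          have h0tj : (0:ℝ) ≤ t j := (hchain j le_rfl).1
          have h0u : (0:ℝ) ≤ u n := by
            have := (hδpos n).le; simp only [hu]; linarith
          rw [hgeo (u n) ⟨h0u, huD n⟩ (t j) ⟨h0tj, htjD.le⟩]
          simp only [hu]
          rw [show t j + δ n - t j = δ n by ring, abs_of_nonneg (hδpos n).le]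
        exact hδ0.congr (fun n => (heqd n).symm)
      have hc0 : Filter.Tendsto (fun n => d' (ω (u n)) (ω (t j))) Filter.atTop (nhds 0) :=
        (htop _ _).mpr hωu
      set a : ℕ → ℝ := fun n => d' (ω (u n)) (ω (t i)) with ha
      have hanear : ∀ n, b - d' (ω (u n)) (ω (t j)) ≤ a n ∧
          a n ≤ d' (ω (u n)) (ω (t j)) + b := by
        intro n
        constructor
        · have := hd'tri (ω (t j)) (ω (u n)) (ω (t i))
          rw [hd'symm (ω (t j)) (ω (u n))] at this
          simp only [ha]; linarith
        · exact hd'tri _ _ _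
      have halim : Filter.Tendsto a Filter.atTop (nhds b) := by
        exact tendsto_of_tendsto_of_tendsto_of_le_of_le
          (by simpa using (tendsto_const_nhds (x := b)).sub hc0)
          (by simpa using hc0.add (tendsto_const_nhds (x := b)))
          (fun n => (hanear n).1) (fun n => (hanear n).2)
      have hah : ∀ n, h ≤ a n := by
        intro n
        have : t (i+1) < u n := by
          rw [heq]; simp only [hu]; linarith [hδpos n]
        exact (hfar (u n) this (huD n)).le
      exact ge_of_tendsto halim (Filter.Eventually.of_forall hah)
  -- conclude
  rintro z ⟨hz1, hz2⟩
  have : d' (ω (t j)) (ω (t i)) ≤ d' (ω (t j)) z + d' z (ω (t i)) := hd'tri _ _ _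
  rw [hd'symm (ω (t j)) z] at this
  linarith
end

section
/- Let (E, d) be a compact metric space equipped with a Borel probability measure Vol, and let d* ≥ d be another metric on E inducing the same topology. Suppose there exist constants c, c' > 0 and an exponent 0 < δ < 1 such that Vol( closed ball B̄_d(x,h) ) ≤ c·h^{4-δ} and Vol( open ball B_{d*}(x,h) ) ≥ c'·h^{4+δ} for all x ∈ E and all h ∈ (0,1). Assume moreover that (E,d) is a geodesic space. Then for all x,y ∈ E with 0 < d(x,y) < 1/2, one has d*(x,y) ≤ (2^8 c / c') · d(x,y)^{1-2δ}. -/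
open Set MeasureTheory
open scoped ENNReal NNReal

private lemma d'_continuous {E : Type*} [MetricSpace E] (d' : E → E → ℝ)
    (hd'symm : ∀ a b : E, d' a b = d' b a)
    (hd'tri : ∀ a b c : E, d' a c ≤ d' a b + d' b c)
    (htop : ∀ (u : ℕ → E) (a : E),
      Filter.Tendsto (fun n => d' (u n) a) Filter.atTop (nhds 0) ↔
      Filter.Tendsto u Filter.atTop (nhds a)) (a : E) :
    Continuous (fun b => d' a b) := by
  rw [continuous_iff_seqContinuous]
  intro u b hub
  have h0 : Filter.Tendsto (fun n => d' (u n) b) Filter.atTop (nhds 0) := (htop u b).mpr hub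
  have : Filter.Tendsto (fun n => d' a (u n)) Filter.atTop (nhds (d' a b)) := by
    rw [tendsto_iff_dist_tendsto_zero]
    apply squeeze_zero (fun n => dist_nonneg) _ h0
    intro n
    have h1 := hd'tri a (u n) b
    have h2 := hd'tri a b (u n)
    have hs := hd'symm b (u n)
    rw [Real.dist_eq, abs_sub_le_iff]
    constructor <;> linarith
  exact this

theorem stmt_7 {E : Type*} [MetricSpace E] [CompactSpace E]
    [MeasurableSpace E] [BorelSpace E]
    (Vol : Measure E) [IsProbabilityMeasure Vol]
    (d' : E → E → ℝ)
    (hd'nonneg : ∀ a b : E, 0 ≤ d' a b)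
    (hd'symm : ∀ a b : E, d' a b = d' b a)
    (hd'tri : ∀ a b c : E, d' a c ≤ d' a b + d' b c)
    (hd'self : ∀ a : E, d' a a = 0)
    (hd'eq : ∀ a b : E, d' a b = 0 → a = b)
    (hle : ∀ a b : E, dist a b ≤ d' a b)
    (htop : ∀ (u : ℕ → E) (a : E),
      Filter.Tendsto (fun n => d' (u n) a) Filter.atTop (nhds 0) ↔
      Filter.Tendsto u Filter.atTop (nhds a))
    (hgeo : ∀ x y : E, ∃ ω : ℝ → E, ω 0 = x ∧ ω (dist x y) = y ∧
      ∀ t ∈ Icc (0:ℝ) (dist x y), ∀ t' ∈ Icc (0:ℝ) (dist x y),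
        dist (ω t) (ω t') = |t - t'|)
    (c c' δ : ℝ) (hc : 0 < c) (hc' : 0 < c') (hδ : δ ∈ Ioo (0:ℝ) 1)
    (hball : ∀ x : E, ∀ h ∈ Ioo (0:ℝ) 1,
      Vol (Metric.closedBall x h) ≤ ENNReal.ofReal (c * h ^ ((4:ℝ) - δ)))
    (hball' : ∀ x : E, ∀ h ∈ Ioo (0:ℝ) 1,
      ENNReal.ofReal (c' * h ^ ((4:ℝ) + δ)) ≤ Vol {y | d' x y < h}) :
    ∀ x y : E, 0 < dist x y → dist x y < 1/2 →
      d' x y ≤ (2^8 * c / c') * dist x y ^ ((1:ℝ) - 2*δ) := by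
  intro x y hxy hxy2
  set r := dist x y with hr
  obtain ⟨ω, hω0, hωr, hiso⟩ := hgeo x y
  have hr0 : 0 < r := hxy
  have contd : ∀ a : E, Continuous (fun b => d' a b) :=
    fun a => d'_continuous d' hd'symm hd'tri htop a
  have ωcont : ContinuousOn ω (Icc 0 r) := by
    apply LipschitzOnWith.continuousOn (K := 1)
    apply LipschitzOnWith.of_dist_le_mul
    intro s hs t ht
    rw [hiso s hs t ht, Real.dist_eq]
    simp
  have gcont : ∀ a : E, ContinuousOn (fun t => d' a (ω t)) (Icc 0 r) :=
    fun a => (contd a).comp_continuousOn ωcont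
  set S : ℝ → Set ℝ := fun s => {t | t ∈ Icc s r ∧ d' (ω s) (ω t) ≤ r} with hS
  set F : ℝ → ℝ := fun s => sSup (S s) with hFdef
  have hSsub : ∀ s, 0 ≤ s → S s ⊆ Icc 0 r := fun s hs t ht => ⟨hs.trans ht.1.1, ht.1.2⟩
  have hself : ∀ s ∈ Icc (0:ℝ) r, s ∈ S s :=
    fun s hs => ⟨⟨le_refl s, hs.2⟩, by rw [hd'self]; exact hr0.le⟩
  have hSbdd : ∀ s, BddAbove (S s) := fun s => ⟨r, fun t ht => ht.1.2⟩
  have hSne : ∀ s ∈ Icc (0:ℝ) r, (S s).Nonempty := fun s hs => ⟨s, hself s hs⟩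
  have hSclosed : ∀ s ∈ Icc (0:ℝ) r, IsClosed (S s) := by
    intro s hs
    have hEq : S s = Icc s r ∩ (fun t => d' (ω s) (ω t)) ⁻¹' Iic r := by
      ext t; simp [hS, Set.mem_inter_iff, Set.mem_preimage]
    rw [hEq]
    exact ContinuousOn.preimage_isClosed_of_isClosed
      ((gcont (ω s)).mono (Icc_subset_Icc_left hs.1)) isClosed_Icc isClosed_Iic
  have hFS : ∀ s ∈ Icc (0:ℝ) r, F s ∈ S s :=
    fun s hs => (hSclosed s hs).csSup_mem (hSne s hs) (hSbdd s)
  have hFmem : ∀ s ∈ Icc (0:ℝ) r, F s ∈ Icc (0:ℝ) r := fun s hs => hSsub s hs.1 (hFS s hs)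
  have hFge : ∀ s ∈ Icc (0:ℝ) r, s ≤ F s := fun s hs => le_csSup (hSbdd s) (hself s hs)
  have hFle : ∀ s ∈ Icc (0:ℝ) r, d' (ω s) (ω (F s)) ≤ r := fun s hs => (hFS s hs).2
  have hFgt : ∀ s ∈ Icc (0:ℝ) r, s < r → s < F s := by
    intro s hs hsr
    have hg : ContinuousWithinAt (fun t => d' (ω s) (ω t)) (Icc 0 r) s := (gcont (ω s)) s hs
    rw [Metric.continuousWithinAt_iff] at hg
    obtain ⟨ε, hε, hε2⟩ := hg r hr0
    set t1 := min r (s + ε/2) with ht1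
    have hst1 : s < t1 := lt_min hsr (by linarith)
    have ht1mem : t1 ∈ Icc (0:ℝ) r := ⟨le_trans hs.1 hst1.le, min_le_left _ _⟩
    have hd : dist t1 s < ε := by
      rw [Real.dist_eq, abs_of_nonneg (by linarith)]
      have h2 : t1 ≤ s + ε/2 := min_le_right _ _
      linarith
    have h3 := hε2 ht1mem hd
    rw [Real.dist_eq, hd'self, sub_zero] at h3
    have hv : d' (ω s) (ω t1) < r := (le_abs_self _).trans_lt h3
    have h4 : t1 ∈ S s := ⟨⟨hst1.le, ht1mem.2⟩, hv.le⟩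
    exact lt_of_lt_of_le hst1 (le_csSup (hSbdd s) h4)
  have hFout : ∀ s ∈ Icc (0:ℝ) r, ∀ u ∈ Icc (0:ℝ) r, F s < u → r < d' (ω s) (ω u) := by
    intro s hs u hu hFu
    by_contra h
    push_neg at h
    have h4 : u ∈ S s := ⟨⟨(hFge s hs).trans hFu.le, hu.2⟩, h⟩
    exact absurd (le_csSup (hSbdd s) h4) (not_le.mpr hFu)
  have hFeq : ∀ s ∈ Icc (0:ℝ) r, F s < r → r ≤ d' (ω s) (ω (F s)) := by
    intro s hs hFr
    have hum : F s ∈ Icc (0:ℝ) r := hFmem s hs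
    have hg : ContinuousWithinAt (fun t => d' (ω s) (ω t)) (Icc 0 r) (F s) := (gcont (ω s)) _ hum
    have hsub : Ioc (F s) r ⊆ Icc (0:ℝ) r := fun t ht => ⟨hum.1.trans ht.1.le, ht.2⟩
    have hg2 : Filter.Tendsto (fun t => d' (ω s) (ω t)) (nhdsWithin (F s) (Ioc (F s) r))
        (nhds (d' (ω s) (ω (F s)))) :=
      hg.tendsto.mono_left (nhdsWithin_mono _ hsub)
    haveI hne : (nhdsWithin (F s) (Ioc (F s) r)).NeBot := by
      rw [nhdsWithin_Ioc_eq_nhdsGT hFr]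
      exact inferInstance
    refine ge_of_tendsto hg2 ?_
    filter_upwards [eventually_mem_nhdsWithin] with t ht
    exact (hFout s hs t (hsub ht) ht.1).le
  set tt : ℕ → ℝ := fun n => F^[n] 0 with htt
  have htt0 : tt 0 = 0 := rfl
  have httsucc : ∀ n, tt (n+1) = F (tt n) := fun n => Function.iterate_succ_apply' F n 0
  have httmem : ∀ n, tt n ∈ Icc (0:ℝ) r := by
    intro n; induction n with
    | zero => exact ⟨le_refl 0, hr0.le⟩
    | succ n ih => rw [httsucc]; exact hFmem _ ih
  have httmono : Monotone tt :=
    monotone_nat_of_le_succ (fun n => by rw [httsucc]; exact hFge _ (httmem n))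
  have httstep : ∀ n, d' (ω (tt n)) (ω (tt (n+1))) ≤ r :=
    fun n => by rw [httsucc]; exact hFle _ (httmem n)
  have hsep : ∀ i j : ℕ, i < j → tt j < r → r ≤ d' (ω (tt i)) (ω (tt j)) := by
    intro i j hij hjr
    rcases eq_or_lt_of_le (Nat.succ_le_of_lt hij) with h | h
    · subst h
      rw [httsucc]
      exact hFeq _ (httmem i) (by rw [← httsucc]; exact hjr)
    · have hj1 : j - 1 + 1 = j := by omega
      have hjr' : tt (j-1) < r := lt_of_le_of_lt (httmono (Nat.sub_le j 1)) hjr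
      have h2 : tt (j-1) < tt j := by
        conv_rhs => rw [← hj1]
        rw [httsucc]
        exact hFgt _ (httmem _) hjr'
      have h3 : F (tt i) < tt j := by
        have h4 : tt (i+1) ≤ tt (j-1) := httmono (by omega)
        rw [httsucc] at h4
        linarith
      exact (hFout _ (httmem i) _ (httmem j) h3).le
  have hr2 : r / 2 ∈ Ioo (0:ℝ) 1 := ⟨by linarith, by linarith⟩
  have hr32 : 3 * r / 2 ∈ Ioo (0:ℝ) 1 := ⟨by linarith, by linarith⟩
  set a := c' * (r/2) ^ ((4:ℝ)+δ) with ha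
  set b := c * (3*r/2) ^ ((4:ℝ)-δ) with hb
  have ha0 : 0 < a := mul_pos hc' (Real.rpow_pos_of_pos hr2.1 _)
  have hb0 : 0 < b := mul_pos hc (Real.rpow_pos_of_pos hr32.1 _)
  have hpack : ∀ m : ℕ, (∀ k < m, tt k < r) → (m : ℝ) * a ≤ b := by
    intro m hm
    set U : ℕ → Set E := fun i => {p | d' (ω (tt i)) p < r/2} with hU
    have hUopen : ∀ i, IsOpen (U i) := fun i => isOpen_Iio.preimage (contd (ω (tt i)))
    have hdisj : (↑(Finset.range m) : Set ℕ).PairwiseDisjoint U := by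
      intro i hi j hj hij
      simp only [Finset.coe_range, Set.mem_Iio] at hi hj
      apply Set.disjoint_left.mpr
      intro p hpi hpj
      simp only [hU, Set.mem_setOf_eq] at hpi hpj
      rcases Nat.lt_or_ge i j with h | h
      · have hs1 := hsep i j h (hm j hj)
        have h1 : d' (ω (tt i)) (ω (tt j)) ≤ d' (ω (tt i)) p + d' p (ω (tt j)) := hd'tri _ _ _
        have h2 : d' p (ω (tt j)) = d' (ω (tt j)) p := hd'symm _ _
        linarith
      · have hji : j < i := lt_of_le_of_ne h (Ne.symm hij)
        have hs1 := hsep j i hji (hm i hi)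
        have h1 : d' (ω (tt j)) (ω (tt i)) ≤ d' (ω (tt j)) p + d' p (ω (tt i)) := hd'tri _ _ _
        have h2 : d' p (ω (tt i)) = d' (ω (tt i)) p := hd'symm _ _
        linarith
    have hUsub : ∀ i ∈ Finset.range m, U i ⊆ Metric.closedBall x (3*r/2) := by
      intro i _ p hp
      simp only [hU, Set.mem_setOf_eq] at hp
      simp only [Metric.mem_closedBall]
      have hdx : dist x (ω (tt i)) = tt i := by
        rw [← hω0, hiso 0 ⟨le_refl 0, hr0.le⟩ (tt i) (httmem i), zero_sub, abs_neg,
          abs_of_nonneg (httmem i).1]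
      have h1 : dist x p ≤ dist x (ω (tt i)) + dist (ω (tt i)) p := dist_triangle _ _ _
      have h2 : dist (ω (tt i)) p ≤ d' (ω (tt i)) p := hle _ _
      have h3 := (httmem i).2
      rw [dist_comm]
      linarith
    have hmeas : ∀ i ∈ Finset.range m, MeasurableSet (U i) := fun i _ => (hUopen i).measurableSet
    have hvol : (m : ℝ≥0∞) * ENNReal.ofReal a ≤ Vol (Metric.closedBall x (3*r/2)) := by
      calc (m : ℝ≥0∞) * ENNReal.ofReal a
          = ∑ i ∈ Finset.range m, ENNReal.ofReal a := by
            rw [Finset.sum_const, Finset.card_range, nsmul_eq_mul]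
        _ ≤ ∑ i ∈ Finset.range m, Vol (U i) :=
            Finset.sum_le_sum (fun i _ => hball' (ω (tt i)) (r/2) hr2)
        _ = Vol (⋃ i ∈ Finset.range m, U i) := (measure_biUnion_finset hdisj hmeas).symm
        _ ≤ Vol (Metric.closedBall x (3*r/2)) := measure_mono (Set.iUnion₂_subset hUsub)
    have hfin := hvol.trans (hball x (3*r/2) hr32)
    rw [← ENNReal.ofReal_natCast, ← ENNReal.ofReal_mul (Nat.cast_nonneg m)] at hfin
    exact (ENNReal.ofReal_le_ofReal_iff hb0.le).mp hfin
  have hexists : ∃ n, tt n = r := by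
    by_contra h
    push_neg at h
    have hall : ∀ n, tt n < r := fun n => lt_of_le_of_ne (httmem n).2 (h n)
    obtain ⟨m, hm⟩ := exists_nat_gt (b / a)
    have h1 := hpack m (fun k _ => hall k)
    rw [div_lt_iff₀ ha0] at hm
    linarith
  set N := Nat.find hexists with hNdef
  have hNr : tt N = r := Nat.find_spec hexists
  have hNa : (N : ℝ) * a ≤ b :=
    hpack N (fun k hk => lt_of_le_of_ne (httmem k).2 (Nat.find_min hexists hk))
  have hchain : ∀ n : ℕ, d' (ω 0) (ω (tt n)) ≤ n * r := by
    intro n; induction n with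
    | zero => rw [htt0]; simp [hd'self]
    | succ n ih =>
      have h1 := hd'tri (ω 0) (ω (tt n)) (ω (tt (n+1)))
      have h2 := httstep n
      push_cast
      linarith
  have hdxy : d' x y ≤ (N : ℝ) * r := by
    have h1 := hchain N
    rw [hNr, hω0, hωr] at h1
    exact h1
  -- final arithmetic
  set p := (4:ℝ) - δ with hp
  set q := (4:ℝ) + δ with hq
  have hb' : b = c * ((3/2:ℝ)^p * r^p) := by
    rw [hb, show 3*r/2 = (3/2)*r by ring, Real.mul_rpow (by norm_num) hr0.le]
  have ha' : a = c' * (r^q * ((2:ℝ)^q)⁻¹) := by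
    rw [ha, show r/2 = r * (2:ℝ)⁻¹ by ring, Real.mul_rpow hr0.le (by norm_num),
      Real.inv_rpow (by norm_num)]
  have hpow1 : (3/2:ℝ)^p ≤ 81/16 := by
    have h1 : (3/2:ℝ)^p ≤ (3/2:ℝ)^(4:ℝ) :=
      Real.rpow_le_rpow_of_exponent_le (by norm_num) (by rw [hp]; linarith [hδ.1])
    have h2 : (3/2:ℝ)^(4:ℝ) = 81/16 := by
      rw [show (4:ℝ) = ((4:ℕ):ℝ) by norm_num, Real.rpow_natCast]; norm_num
    linarith
  have hpow2 : (2:ℝ)^q ≤ 32 := by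
    have h1 : (2:ℝ)^q ≤ (2:ℝ)^(5:ℝ) :=
      Real.rpow_le_rpow_of_exponent_le (by norm_num) (by rw [hq]; linarith [hδ.2])
    have h2 : (2:ℝ)^(5:ℝ) = 32 := by
      rw [show (5:ℝ) = ((5:ℕ):ℝ) by norm_num, Real.rpow_natCast]; norm_num
    linarith
  have hpow2' : (0:ℝ) < (2:ℝ)^q := Real.rpow_pos_of_pos (by norm_num) _
  have hpow1' : (0:ℝ) < (3/2:ℝ)^p := Real.rpow_pos_of_pos (by norm_num) _
  have hrln : r ^ p * r = r ^ ((1:ℝ) - 2*δ) * r ^ q := by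
    rw [← Real.rpow_add_one hr0.ne' p, ← Real.rpow_add hr0]
    congr 1
    rw [hp, hq]; ring
  have hX : (0:ℝ) ≤ r ^ ((1:ℝ) - 2*δ) * r ^ q :=
    le_of_lt (mul_pos (Real.rpow_pos_of_pos hr0 _) (Real.rpow_pos_of_pos hr0 _))
  have hprod : (3/2:ℝ)^p * (2:ℝ)^q ≤ 162 := by
    have h1 := mul_le_mul hpow1 hpow2 hpow2'.le (by norm_num : (0:ℝ) ≤ 81/16)
    linarith
  have hcoef : c * (3/2:ℝ)^p * (2:ℝ)^q ≤ 2^8 * c := by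
    nlinarith [mul_le_mul_of_nonneg_left hprod hc.le]
  have hcoef' : c * (3/2:ℝ)^p ≤ 2^8 * c * ((2:ℝ)^q)⁻¹ := by
    have h1 : c * (3/2:ℝ)^p ≤ (2^8 * c) / ((2:ℝ)^q) := (le_div_iff₀ hpow2').mpr hcoef
    rw [div_eq_mul_inv] at h1
    exact h1
  have key : b * r ≤ (2^8 * c / c') * r ^ ((1:ℝ) - 2*δ) * a := by
    calc b * r = (c * (3/2:ℝ)^p) * (r^p * r) := by rw [hb']; ring
      _ = (c * (3/2:ℝ)^p) * (r^((1:ℝ) - 2*δ) * r^q) := by rw [hrln]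
      _ ≤ (2^8 * c * ((2:ℝ)^q)⁻¹) * (r^((1:ℝ) - 2*δ) * r^q) :=
          mul_le_mul_of_nonneg_right hcoef' hX
      _ = (2^8 * c / c') * r ^ ((1:ℝ) - 2*δ) * a := by
          rw [ha']; field_simp
  have h3 : (N:ℝ) * r * a ≤ (2^8 * c / c') * r ^ ((1:ℝ) - 2*δ) * a := by
    calc (N:ℝ) * r * a = ((N:ℝ) * a) * r := by ring
      _ ≤ b * r := mul_le_mul_of_nonneg_right hNa hr0.le
      _ ≤ _ := key
  have h4 : (N:ℝ) * r ≤ (2^8 * c / c') * r ^ ((1:ℝ) - 2*δ) := le_of_mul_le_mul_right h3 ha0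
  linarith
end

section
/- Let (Λ_i)_{0 ≤ i ≤ N} be integers with Λ_{i+1} ≥ Λ_i - 1, and let Λ_min = min_i Λ_i. Extend cyclically by Λ_{N+i} = Λ_i. For an index i with Λ_i > Λ_min, define the successor succ(i) as the first j ∈ {i+1, …, i+N-1} with Λ_j = Λ_i - 1, and define φ_{(i)}(k) = min{ j ∈ {i, …, i+N-1} : Λ_j = Λ_i - k } for 0 ≤ k ≤ Λ_i - Λ_min. Then φ_{(i)}(k+1) = succ(φ_{(i)}(k)) for every 0 ≤ k < Λ_i - Λ_min, and Λ_{φ_{(i)}(k)} = Λ_i - k. -/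
/-!
Since `Λ` descends by at most one per step, it cannot skip a value on its way down: starting from
`i`, it takes every value between `Λ i` and the minimum, which periodicity places in the window
`[i, i + N - 1]`. So the first hitting times `φ k` exist, and the first visit to `Λ i - k - 1`
comes after the first visit to `Λ i - k`. Hence `φ (k + 1)` is also the first visit to
`Λ (φ k) - 1` after `φ k`, which is `succ (φ k)`.
-/

theorem Function.Periodic.exists_mem_Ico_nat {α : Type*} {f : ℕ → α} {n : ℕ}
    (hf : Function.Periodic f n) (hn : 0 < n) (a x : ℕ) :
    ∃ y ∈ Set.Ico a (a + n), f y = f x := by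
  have hx : x % n ∈ (Finset.Ico a (a + n)).image (· % n) := by
    rw [Nat.image_Ico_mod]
    exact Finset.mem_range.2 (Nat.mod_lt x hn)
  obtain ⟨y, hy, hyx⟩ := Finset.mem_image.1 hx
  exact ⟨y, Finset.mem_Ico.1 hy, by rw [← hf.map_mod_nat, hyx, hf.map_mod_nat]⟩

section DownwardSkipFree

variable {f : ℕ → ℤ}

theorem exists_mem_Icc_apply_eq (hf : ∀ n, f n - 1 ≤ f (n + 1)) {a b : ℕ} (hab : a ≤ b) {v : ℤ}
    (hb : f b ≤ v) (ha : v ≤ f a) :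
    ∃ j ∈ Set.Icc a b, f j = v := by
  induction b, hab using Nat.le_induction with
  | base => exact ⟨a, ⟨le_rfl, le_rfl⟩, le_antisymm hb ha⟩
  | succ b hab ih =>
    by_cases hbv : f b ≤ v
    · obtain ⟨j, ⟨haj, hjb⟩, hj⟩ := ih hbv
      exact ⟨j, ⟨haj, hjb.trans b.le_succ⟩, hj⟩
    · exact ⟨b + 1, ⟨hab.trans b.le_succ, le_rfl⟩, le_antisymm hb (by linarith [hf b])⟩

theorem lt_of_isLeast_apply_eq (hf : ∀ n, f n - 1 ≤ f (n + 1)) {a b p q : ℕ} {v : ℤ}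
    (hp : IsLeast {j | a ≤ j ∧ j ≤ b ∧ f j = v} p) (hv : v ≤ f a)
    (haq : a ≤ q) (hqb : q ≤ b) (hq : f q < v) : p < q := by
  obtain ⟨j, ⟨haj, hjq⟩, hj⟩ := exists_mem_Icc_apply_eq hf haq hq.le hv
  have hjq' : j < q := lt_of_le_of_ne hjq (by rintro rfl; exact hq.ne hj)
  exact (hp.2 ⟨haj, hjq.trans hqb, hj⟩).trans_lt hjq'

theorem isLeast_apply_eq_sub_one_of_isLeast (hf : ∀ n, f n - 1 ≤ f (n + 1))
    {a n p q : ℕ} {v : ℤ}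
    (hp : IsLeast {j | a ≤ j ∧ j ≤ a + n - 1 ∧ f j = v} p)
    (hq : IsLeast {j | a ≤ j ∧ j ≤ a + n - 1 ∧ f j = v - 1} q) (hv : v ≤ f a) :
    IsLeast {j | p < j ∧ j ≤ p + n - 1 ∧ f j = f p - 1} q := by
  obtain ⟨hap, -, hpv⟩ := hp.1
  obtain ⟨⟨haq, hqn, hqv⟩, hq_le⟩ := hq
  have hpq : p < q := lt_of_isLeast_apply_eq hf hp hv haq hqn (by omega)
  refine ⟨⟨hpq, by omega, by rw [hpv, hqv]⟩, fun j ⟨hpj, hjn, hj⟩ => ?_⟩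
  by_contra! hjq
  exact hjq.not_ge (hq_le ⟨by omega, by omega, by rw [hj, hpv]⟩)

end DownwardSkipFree

theorem stmt_13_general (N : ℕ) (hN : 1 ≤ N) (Λ : ℕ → ℤ)
    (hper : ∀ i : ℕ, Λ (i + N) = Λ i)
    (hstep : ∀ i : ℕ, Λ (i+1) ≥ Λ i - 1)
    (m : ℤ) (hmex : ∃ i : ℕ, Λ i = m)
    (succ : ℕ → ℕ)
    (hsucc : ∀ a : ℕ, m < Λ a →
      succ a = sInf {j : ℕ | a < j ∧ j ≤ a + N - 1 ∧ Λ j = Λ a - 1})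
    (i : ℕ)
    (φ : ℕ → ℕ)
    (hφ : ∀ k : ℕ, (k : ℤ) ≤ Λ i - m →
      φ k = sInf {j : ℕ | i ≤ j ∧ j ≤ i + N - 1 ∧ Λ j = Λ i - k}) :
    (∀ k : ℕ, (k : ℤ) ≤ Λ i - m → Λ (φ k) = Λ i - k) ∧
    (∀ k : ℕ, (k : ℤ) < Λ i - m → φ (k+1) = succ (φ k)) := by
  obtain ⟨x, hx⟩ := hmex
  obtain ⟨a, ⟨hia, haN⟩, ha⟩ := Function.Periodic.exists_mem_Ico_nat hper hN i x
  have hφ_least : ∀ k : ℕ, (k : ℤ) ≤ Λ i - m →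
      IsLeast {j | i ≤ j ∧ j ≤ i + N - 1 ∧ Λ j = Λ i - k} (φ k) := by
    intro k hk
    obtain ⟨j, ⟨hij, hja⟩, hj⟩ :=
      exists_mem_Icc_apply_eq hstep hia (v := Λ i - k) (by omega) (by omega)
    rw [hφ k hk]
    exact ⟨Nat.sInf_mem ⟨j, hij, by omega, hj⟩, fun _ => Nat.sInf_le⟩
  refine ⟨fun k hk => (hφ_least k hk).1.2.2, fun k hk => ?_⟩
  have hp := hφ_least k hk.le
  have hq : IsLeast {j | i ≤ j ∧ j ≤ i + N - 1 ∧ Λ j = Λ i - k - 1} (φ (k + 1)) := by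
    simpa only [Nat.cast_add, Nat.cast_one, ← sub_sub] using
      hφ_least (k + 1) (by push_cast; omega)
  rw [hsucc _ (by rw [hp.1.2.2]; omega)]
  exact (isLeast_apply_eq_sub_one_of_isLeast hstep hp hq (by omega)).csInf_eq.symm

theorem stmt_13 (N : ℕ) (hN : 1 ≤ N) (Λ : ℕ → ℤ)
    (hper : ∀ i : ℕ, Λ (i + N) = Λ i)
    (hstep : ∀ i : ℕ, Λ (i+1) ≥ Λ i - 1)
    (m : ℤ) (hm : ∀ i : ℕ, m ≤ Λ i) (hmex : ∃ i : ℕ, Λ i = m)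
    (succ : ℕ → ℕ)
    (hsucc : ∀ a : ℕ, m < Λ a →
      succ a = sInf {j : ℕ | a < j ∧ j ≤ a + N - 1 ∧ Λ j = Λ a - 1})
    (i : ℕ) (hi : m < Λ i)
    (φ : ℕ → ℕ)
    (hφ : ∀ k : ℕ, (k : ℤ) ≤ Λ i - m →
      φ k = sInf {j : ℕ | i ≤ j ∧ j ≤ i + N - 1 ∧ Λ j = Λ i - k}) :
    (∀ k : ℕ, (k : ℤ) ≤ Λ i - m → Λ (φ k) = Λ i - k) ∧
    (∀ k : ℕ, (k : ℤ) < Λ i - m → φ (k+1) = succ (φ k)) :=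
  stmt_13_general N hN Λ hper hstep m hmex succ hsucc i φ hφ
end

section
/- Let m ≥ 1, K ≥ 2, q ≥ 2 be integers and suppose nonnegative reals P(k₁,…,k_m) indexed by increasing tuples satisfy the recursive bound: P(k₁,…,k_m) ≤ Σ_{j=1}^m b(k_j - k₁) · P(k_{j+1},…,k_m), where P(empty tuple) = 1 and b(d) ≤ (1/2)·K^{-2qd - q} for all d ≥ 0. Then P(k₁,…,k_m) ≤ K^{-qm} for every increasing tuple k₁ < k₂ < ⋯ < k_m. -/
/-!
Put `x = K⁻ᵠ ≤ 1/2` and induct on the length `m` of the tuple. In the recursive bound the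
`j`-th term has `k_j - k₁ ≥ j`, so it is at most `½ x^(2j+1) · x^(m-1-j) = ½ x^j · x^m`;
summing the geometric series `Σ ½ x^j ≤ Σ 2^(-j-1) ≤ 1` gives `P ≤ x^m`.
-/

open Finset

lemma List.add_le_getD_of_isChain_lt :
    ∀ {k : ℕ} {l : List ℕ}, (k :: l).IsChain (· < ·) →
      ∀ {j : ℕ}, j < (k :: l).length → k + j ≤ (k :: l).getD j 0
  | _, [], _, 0, _ => le_rfl
  | _, a :: t, hc, 0, _ => le_rfl
  | k, a :: t, hc, j + 1, hj => by
    obtain ⟨hka, ht⟩ := List.isChain_cons_cons.mp hc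
    have := List.add_le_getD_of_isChain_lt ht (j := j) (by simpa using hj)
    simp only [List.getD_cons_succ]
    omega

lemma sum_half_mul_pow_le_one {x : ℝ} (hx0 : 0 ≤ x) (hx : x ≤ 1 / 2) (m : ℕ) :
    ∑ j ∈ range m, 1 / 2 * x ^ j ≤ 1 :=
  calc ∑ j ∈ range m, 1 / 2 * x ^ j
      ≤ ∑ j ∈ range m, 1 / 2 * (1 / 2 : ℝ) ^ j := by gcongr
    _ = 1 / 2 * ∑ j ∈ range m, (1 / 2 : ℝ) ^ j := by rw [mul_sum]
    _ ≤ 1 / 2 * 2 := by gcongr; exact sum_geometric_two_le m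
    _ = 1 := by norm_num

theorem le_pow_length_of_le_sum {P : List ℕ → ℝ} {b : ℕ → ℝ} {x : ℝ}
    (hx0 : 0 ≤ x) (hx : x ≤ 1 / 2) (hP : ∀ l, 0 ≤ P l) (hPnil : P [] ≤ 1)
    (hb : ∀ d, b d ≤ 1 / 2 * x ^ (2 * d + 1))
    (hrec : ∀ (k : ℕ) (l : List ℕ), (k :: l).IsChain (· < ·) →
      P (k :: l) ≤ ∑ j ∈ range (k :: l).length,
        b ((k :: l).getD j 0 - k) * P ((k :: l).drop (j + 1))) :
    ∀ l : List ℕ, l.IsChain (· < ·) → P l ≤ x ^ l.length := by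
  -- The recursion refers to suffixes `l.drop j`, so induct on `l` for all its suffixes at once.
  suffices ∀ l : List ℕ, l.IsChain (· < ·) → ∀ i, P (l.drop i) ≤ x ^ (l.drop i).length from
    fun l hl => this l hl 0
  intro l
  induction l with
  | nil => intro _ i; simpa using hPnil
  | cons k l ih =>
    intro hc i
    cases i with
    | succ i => exact ih hc.tail i
    | zero =>
      have hterm : ∀ j ∈ range (l.length + 1),
          b ((k :: l).getD j 0 - k) * P (l.drop j) ≤ x ^ (l.length + 1) * (1 / 2 * x ^ j) := by
        intro j hj
        have hj := mem_range.mp hj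
        have hd : j ≤ (k :: l).getD j 0 - k := by
          have := List.add_le_getD_of_isChain_lt hc (j := j) (by simpa using hj)
          omega
        calc b ((k :: l).getD j 0 - k) * P (l.drop j)
            ≤ 1 / 2 * x ^ (2 * j + 1) * x ^ (l.length - j) := by
              refine mul_le_mul ((hb _).trans ?_) ?_ (hP _) (by positivity)
              · gcongr 1 / 2 * ?_
                exact pow_le_pow_of_le_one hx0 (by linarith) (by omega)
              · simpa using ih hc.tail j
          _ = x ^ (l.length + 1) * (1 / 2 * x ^ j) := by
              obtain ⟨t, ht⟩ : ∃ t, l.length = j + t := ⟨l.length - j, by omega⟩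
              rw [ht, Nat.add_sub_cancel_left]
              ring
      calc P (k :: l)
          ≤ ∑ j ∈ range (l.length + 1), b ((k :: l).getD j 0 - k) * P (l.drop j) := hrec k l hc
        _ ≤ ∑ j ∈ range (l.length + 1), x ^ (l.length + 1) * (1 / 2 * x ^ j) := sum_le_sum hterm
        _ = x ^ (l.length + 1) * ∑ j ∈ range (l.length + 1), 1 / 2 * x ^ j := by rw [mul_sum]
        _ ≤ x ^ (l.length + 1) :=
          mul_le_of_le_one_right (by positivity) (sum_half_mul_pow_le_one hx0 hx _)

theorem stmt_16_general (K q : ℕ) (hK : 2 ≤ K) (hq : 2 ≤ q)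
    (P : List ℕ → ℝ) (hPnonneg : ∀ l, 0 ≤ P l) (hPnil : P [] = 1)
    (b : ℕ → ℝ)
    (hb : ∀ d : ℕ, b d ≤ (1/2) * ((K : ℝ) ^ (2 * q * d + q))⁻¹)
    (hrec : ∀ (k : ℕ) (l : List ℕ), (k :: l).Chain' (· < ·) →
      P (k :: l) ≤ ∑ j ∈ Finset.range (k :: l).length,
        b ((k :: l).getD j 0 - k) * P ((k :: l).drop (j+1))) :
    ∀ l : List ℕ, l.Chain' (· < ·) → P l ≤ ((K : ℝ) ^ (q * l.length))⁻¹ := by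
  have hK' : (2 : ℝ) ≤ K := mod_cast hK
  have hKq : (2 : ℝ) ≤ (K : ℝ) ^ q := hK'.trans (le_self_pow₀ (by linarith) (by omega))
  have hx : ((K : ℝ) ^ q)⁻¹ ≤ 1 / 2 := by
    rw [one_div]; exact inv_anti₀ two_pos hKq
  have hb' : ∀ d, b d ≤ 1 / 2 * ((K : ℝ) ^ q)⁻¹ ^ (2 * d + 1) := fun d => by
    rw [inv_pow, ← pow_mul, mul_add, mul_one, ← mul_assoc, mul_comm q 2]
    exact hb d
  intro l hl
  rw [pow_mul, ← inv_pow]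
  exact le_pow_length_of_le_sum (by positivity) hx hPnonneg hPnil.le hb' hrec l hl

theorem stmt_16 (K q : ℕ) (hK : 2 ≤ K) (hq : 2 ≤ q)
    (P : List ℕ → ℝ) (hPnonneg : ∀ l, 0 ≤ P l) (hPnil : P [] = 1)
    (b : ℕ → ℝ) (hbnonneg : ∀ d, 0 ≤ b d)
    (hb : ∀ d : ℕ, b d ≤ (1/2) * ((K : ℝ) ^ (2 * q * d + q))⁻¹)
    (hrec : ∀ (k : ℕ) (l : List ℕ), (k :: l).Chain' (· < ·) →
      P (k :: l) ≤ ∑ j ∈ Finset.range (k :: l).length,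
        b ((k :: l).getD j 0 - k) * P ((k :: l).drop (j+1))) :
    ∀ l : List ℕ, l.Chain' (· < ·) → P l ≤ ((K : ℝ) ^ (q * l.length))⁻¹ :=
  stmt_16_general K q hK hq P hPnonneg hPnil b hb hrec
end
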